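/- Suppose an affine Markov random walk satisfies $\log \mathbb{E}_x[e^{\eta^\top X_1}] = C_1(\eta)^\top x + C_2(\eta)$ and $\psi(x, x', \theta) := \log \mathbb{E}[e^{\theta^\top Y_1} \mid X_0 = x, X_1 = x'] = D_0(\theta)^\top x' + D_1(\theta)^\top x + D_2(\theta)$. If a vector $A(\theta)$ solves the fixed-point equation $C_1(A(\theta) + D_0(\theta)) + D_1(\theta) = A(\theta)$, then $r(x, \theta) = e^{A(\theta)^\top x}$ is an eigenfunction of the tilted operator: $\mathbb{E}_x[e^{\theta^\top Y_1} r(X_1, \theta)] = e^{\Lambda(\theta)} r(x, \theta)$ with eigenvalue exponent $\Lambda(\theta) = C_2(A(\theta) + D_0(\theta)) + D_2(\theta)$. -/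
import Mathlib


open MeasureTheory Matrix

/-- For an affine Markov random walk with
`E_x[e^{η⬝X₁}] = e^{C₁(η)⬝x + C₂(η)}` and conditional cumulant generating function
`ψ(x,x',θ) = D₀(θ)⬝x' + D₁(θ)⬝x + D₂(θ)`, if `A(θ)` solves
`C₁(A(θ)+D₀(θ)) + D₁(θ) = A(θ)`, then `r(x,θ) = e^{A(θ)⬝x}` is an eigenfunction of the
tilted operator with eigenvalue `e^{Λ(θ)}`, `Λ(θ) = C₂(A(θ)+D₀(θ)) + D₂(θ)`. -/
theorem stmt12 {m d : ℕ}
    (p : (Fin m → ℝ) → Measure (Fin m → ℝ)) (hp : ∀ x, IsProbabilityMeasure (p x))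
    (C1 : (Fin m → ℝ) → (Fin m → ℝ)) (C2 : (Fin m → ℝ) → ℝ)
    (D0 D1 : (Fin d → ℝ) → (Fin m → ℝ)) (D2 : (Fin d → ℝ) → ℝ)
    (haff : ∀ x η, ∫ x', Real.exp (η ⬝ᵥ x') ∂(p x) = Real.exp (C1 η ⬝ᵥ x + C2 η))
    (A : (Fin d → ℝ) → (Fin m → ℝ))
    (hA : ∀ θ, C1 (A θ + D0 θ) + D1 θ = A θ) :
    ∀ (θ : Fin d → ℝ) (x : Fin m → ℝ),
      ∫ x', Real.exp (D0 θ ⬝ᵥ x' + D1 θ ⬝ᵥ x + D2 θ) * Real.exp (A θ ⬝ᵥ x') ∂(p x)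
        = Real.exp (C2 (A θ + D0 θ) + D2 θ) * Real.exp (A θ ⬝ᵥ x) := by
  intro θ x
  have key : ∀ x' : Fin m → ℝ,
      Real.exp (D0 θ ⬝ᵥ x' + D1 θ ⬝ᵥ x + D2 θ) * Real.exp (A θ ⬝ᵥ x')
        = Real.exp (D1 θ ⬝ᵥ x + D2 θ) * Real.exp ((A θ + D0 θ) ⬝ᵥ x') := by
    intro x'
    rw [← Real.exp_add, ← Real.exp_add, add_dotProduct]
    ring_nf
  simp_rw [key, integral_const_mul, haff x (A θ + D0 θ)]
  have h2 : C1 (A θ + D0 θ) ⬝ᵥ x + D1 θ ⬝ᵥ x = A θ ⬝ᵥ x := by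
    rw [← add_dotProduct, hA]
  rw [← Real.exp_add, ← Real.exp_add]
  congr 1
  linarith
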